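/- arXiv:2308.03785 — 4 statements merged into one kernel-verified Lean document; each statement's English description precedes it below -/
import Mathlib

section
/- The two parameterizations ρ = (1/2, 1/2), A = [[1, 1/2, 0], [1, 1, 1/2]] and ρ̃ = (1/4, 3/4), Ã = [[1, 0, 0], [1, 1, 1/3]] of the asymmetric hub model with n_L = 2 hub nodes and n = 3 nodes induce the same probability distribution on {0,1}³. That is, for every g ∈ {0,1}³, Σ_{i=1}^{2} ρ_i Π_{j=1}^{3} A_{ij}^{g_j}(1-A_{ij})^{1-g_j} = Σ_{i=1}^{2} ρ̃_i Π_{j=1}^{3} Ã_{ij}^{g_j}(1-Ã_{ij})^{1-g_j}. -/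
open Finset

/-- The two parameterizations ρ = (1/2,1/2), A = [[1,1/2,0],[1,1,1/2]] and
ρ̃ = (1/4,3/4), Ã = [[1,0,0],[1,1,1/3]] of the asymmetric hub model with
2 hubs and 3 nodes induce the same distribution on {0,1}³. -/
theorem stmt_3 :
    ∀ g : Fin 3 → Bool,
      (∑ i : Fin 2, (![(1:ℝ)/2, 1/2]) i *
          ∏ j : Fin 3, (if g j then (!![(1:ℝ), 1/2, 0; 1, 1, 1/2]) i j
            else 1 - (!![(1:ℝ), 1/2, 0; 1, 1, 1/2]) i j)) =
      (∑ i : Fin 2, (![(1:ℝ)/4, 3/4]) i *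
          ∏ j : Fin 3, (if g j then (!![(1:ℝ), 0, 0; 1, 1, 1/3]) i j
            else 1 - (!![(1:ℝ), 0, 0; 1, 1, 1/3]) i j)) := by
  -- Both sides vanish unless `g 0`, and otherwise give `(g 1, g 2)` the law
  -- `(0,0) ↦ 1/4, (1,0) ↦ 1/2, (0,1) ↦ 0, (1,1) ↦ 1/4`.
  intro g
  cases h₀ : g 0 <;> cases h₁ : g 1 <;> cases h₂ : g 2 <;>
    simp [Fin.sum_univ_two, Fin.prod_univ_three, h₀, h₁, h₂] <;> norm_num
end

section
/- The two parameterizations ρ = (1/2, 1/2), A = [[1/2, 0, 1/2], [1, 1/2, 1/2]] and ρ̃ = (1/4, 3/4), Ã = [[0, 0, 1/2], [1, 1/3, 1/2]] of the hub model with null component (n_L = 1 hub node, n = 3 nodes, row 0 being the null component) induce the same probability distribution on {0,1}³. -/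
/-!
Every row has entry `1/2` in column 2, so under both parameterizations the last coordinate is a
fair coin independent of the first two. The law of `(g 0, g 1)` is the same for both: the values
`11, 10, 01, 00` get masses `1/4, 1/2, 0, 1/4`.
-/

/-- The two parameterizations ρ = (1/2,1/2), A = [[1/2,0,1/2],[1,1/2,1/2]] and
ρ̃ = (1/4,3/4), Ã = [[0,0,1/2],[1,1/3,1/2]] of the hub model with null component
(row 0 is the null component) induce the same distribution on {0,1}³. -/
theorem stmt_5 :
    ∀ g : Fin 3 → Bool,
      (∑ i : Fin 2, (![(1:ℝ)/2, 1/2]) i *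
          ∏ j : Fin 3, (if g j then (!![(1:ℝ)/2, 0, 1/2; 1, 1/2, 1/2]) i j
            else 1 - (!![(1:ℝ)/2, 0, 1/2; 1, 1/2, 1/2]) i j)) =
      (∑ i : Fin 2, (![(1:ℝ)/4, 3/4]) i *
          ∏ j : Fin 3, (if g j then (!![(0:ℝ), 0, 1/2; 1, 1/3, 1/2]) i j
            else 1 - (!![(0:ℝ), 0, 1/2; 1, 1/3, 1/2]) i j)) := by
  intro g
  simp only [Fin.sum_univ_two, Fin.prod_univ_three]
  cases g 0 <;> cases g 1 <;> cases g 2 <;> norm_num [Matrix.cons_val_two]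
end

section
/- Suppose two parameterizations (ρ, A) and (ρ̃, Ã) of the asymmetric hub model (with hub set {1,...,n_L}, node set {1,...,n}, A_{ii}=1, and all off-diagonal entries strictly less than 1) induce the same probability distribution on {0,1}^n. Then for every hub i ∈ {1,...,n_L} and every follower k ∈ {n_L+1,...,n}, Ã_{ik} = A_{ik}. (Proof: compare the probability that only node i appears with the probability that only nodes i and k appear; their ratio determines A_{ik}/(1-A_{ik}).) -/
open Finset

/-- If two parameterizations of the asymmetric hub model (hub set `{0,...,n_L-1}`
inside node set `{0,...,n-1}`, diagonal entries 1, off-diagonal entries in `[0,1)`)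
induce the same distribution on `{0,1}ⁿ`, then the follower columns of `A` are
identified: `Ã i k = A i k` for every hub `i` and every follower `k`. -/
theorem stmt_6 (n_L n : ℕ) (h : n_L < n)
    (ρ ρ' : Fin n_L → ℝ) (A A' : Fin n_L → Fin n → ℝ)
    (hρpos : ∀ i, 0 < ρ i) (hρ'pos : ∀ i, 0 < ρ' i)
    (hρsum : ∑ i, ρ i = 1) (hρ'sum : ∑ i, ρ' i = 1)
    (hdiag : ∀ i : Fin n_L, A i (Fin.castLE h.le i) = 1)
    (hdiag' : ∀ i : Fin n_L, A' i (Fin.castLE h.le i) = 1)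
    (hoff : ∀ (i : Fin n_L) (j : Fin n), (j : ℕ) ≠ (i : ℕ) →
      0 ≤ A i j ∧ A i j < 1)
    (hoff' : ∀ (i : Fin n_L) (j : Fin n), (j : ℕ) ≠ (i : ℕ) →
      0 ≤ A' i j ∧ A' i j < 1)
    (heq : ∀ g : Fin n → Bool,
      (∑ i, ρ i * ∏ j, (if g j then A i j else 1 - A i j)) =
      (∑ i, ρ' i * ∏ j, (if g j then A' i j else 1 - A' i j))) :
    ∀ (i : Fin n_L) (k : Fin n), n_L ≤ (k : ℕ) → A' i k = A i k := by
  intro i k hk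
  set c : Fin n := Fin.castLE h.le i with hc
  have hcval : (c : ℕ) = (i : ℕ) := rfl
  have hkc : k ≠ c := by
    intro hkc
    have : (k : ℕ) = (i : ℕ) := by rw [hkc, hcval]
    omega
  have hkmem : k ∈ univ.erase c := Finset.mem_erase.mpr ⟨hkc, Finset.mem_univ k⟩
  -- key computation of the mixture probability for configurations supported on {c, k}
  have key : ∀ (r : Fin n_L → ℝ) (B : Fin n_L → Fin n → ℝ),
      (∀ i', B i' (Fin.castLE h.le i') = 1) →
      ∀ g : Fin n → Bool, g c = true → (∀ j, j ≠ c → j ≠ k → g j = false) →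
      (∑ i', r i' * ∏ j, (if g j then B i' j else 1 - B i' j)) =
        r i * (if g k then B i k else 1 - B i k) *
          ∏ j ∈ (univ.erase c).erase k, (1 - B i j) := by
    intro r B hdB g hgc hg
    rw [Finset.sum_eq_single i]
    · rw [← Finset.mul_prod_erase univ _ (Finset.mem_univ c),
        ← Finset.mul_prod_erase _ _ hkmem, hgc]
      have hrest : ∏ j ∈ (univ.erase c).erase k,
          (if g j then B i j else 1 - B i j) = ∏ j ∈ (univ.erase c).erase k, (1 - B i j) := by
        refine Finset.prod_congr rfl fun j hj => ?_
        rcases Finset.mem_erase.mp hj with ⟨hj1, hj2⟩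
        rcases Finset.mem_erase.mp hj2 with ⟨hj3, _⟩
        rw [hg j hj3 hj1]
        simp
      rw [hrest]
      have : B i c = 1 := hdB i
      rw [if_pos rfl, this]
      ring
    · intro i' _ hi'
      have h1 : Fin.castLE h.le i' ≠ c := by
        intro hcc
        exact hi' (Fin.ext (by simpa [hcval] using congrArg Fin.val hcc))
      have h2 : Fin.castLE h.le i' ≠ k := by
        intro hcc
        have : (i' : ℕ) = (k : ℕ) := by simpa using congrArg Fin.val hcc
        have := i'.isLt
        omega
      have hz : (∏ j, (if g j then B i' j else 1 - B i' j)) = 0 := by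
        refine Finset.prod_eq_zero (Finset.mem_univ (Fin.castLE h.le i')) ?_
        rw [hg _ h1 h2]
        simp [hdB i']
      rw [hz, mul_zero]
    · intro hi; exact absurd (Finset.mem_univ i) hi
  -- the two configurations
  set g1 : Fin n → Bool := fun j => decide (j = c) with hg1
  set g2 : Fin n → Bool := fun j => decide (j = c ∨ j = k) with hg2
  have hg1c : g1 c = true := by simp [hg1]
  have hg2c : g2 c = true := by simp [hg2]
  have hg1o : ∀ j, j ≠ c → j ≠ k → g1 j = false := by
    intro j hjc hjk; simp [hg1, hjc]
  have hg2o : ∀ j, j ≠ c → j ≠ k → g2 j = false := by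
    intro j hjc hjk; simp [hg2, hjc, hjk]
  have hg1k : g1 k = false := by simp [hg1, hkc]
  have hg2k : g2 k = true := by simp [hg2]
  have e1 := heq g1
  have e2 := heq g2
  rw [key ρ A hdiag g1 hg1c hg1o, key ρ' A' hdiag' g1 hg1c hg1o, hg1k] at e1
  rw [key ρ A hdiag g2 hg2c hg2o, key ρ' A' hdiag' g2 hg2c hg2o, hg2k] at e2
  simp only [if_neg, if_pos, Bool.false_eq_true, ite_false, ite_true] at e1 e2
  set Q : ℝ := ∏ j ∈ (univ.erase c).erase k, (1 - A i j) with hQ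
  set Q' : ℝ := ∏ j ∈ (univ.erase c).erase k, (1 - A' i j) with hQ'
  have hQpos : 0 < Q := by
    refine Finset.prod_pos fun j hj => ?_
    rcases Finset.mem_erase.mp hj with ⟨hj1, hj2⟩
    rcases Finset.mem_erase.mp hj2 with ⟨hj3, _⟩
    have : (j : ℕ) ≠ (i : ℕ) := fun hh => hj3 (Fin.ext (by rw [hh]; rfl))
    linarith [(hoff i j this).2]
  have hQ'pos : 0 < Q' := by
    refine Finset.prod_pos fun j hj => ?_
    rcases Finset.mem_erase.mp hj with ⟨hj1, hj2⟩
    rcases Finset.mem_erase.mp hj2 with ⟨hj3, _⟩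
    have : (j : ℕ) ≠ (i : ℕ) := fun hh => hj3 (Fin.ext (by rw [hh]; rfl))
    linarith [(hoff' i j this).2]
  have ht : ρ i * Q = ρ' i * Q' := by linarith
  have htpos : 0 < ρ i * Q := mul_pos (hρpos i) hQpos
  -- e2 : ρ i * A i k * Q = ρ' i * A' i k * Q'
  have e2' : A i k * (ρ i * Q) = A' i k * (ρ' i * Q') := by linear_combination e2
  rw [← ht] at e2'
  exact (mul_right_cancel₀ (ne_of_gt htpos) e2').symm
end

section
/- Identifiability of the asymmetric hub model: Let n_L < n and let (ρ, A) and (ρ̃, Ã) be parameters with ρ_i, ρ̃_i ∈ (0,1), Σρ_i = Σρ̃_i = 1, A_{ii} = Ã_{ii} = 1 for all hubs i, all off-diagonal entries in [0,1). Assume for all distinct hubs i, i' the follower rows (A_{i,n_L+1},...,A_{i,n}) and (A_{i',n_L+1},...,A_{i',n}) are not identical. If P(g | ρ, A) = P(g | ρ̃, Ã) for all g ∈ {0,1}^n, then (ρ, A) = (ρ̃, Ã). -/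
/-!
Configurations `g` are identified with the finsets `U` of present nodes, hubs are placed among the
nodes by an injection `e`, and the followers are the nodes outside `Set.range e`.

Since `A l (e l) = 1`, a configuration whose only present hub is `i` has probability zero under
every component but the `i`-th, so on such configurations both mixtures are single scaled product
measures; comparing `{e i}` with `{e i, k}` identifies the odds of `A i k` for every follower `k`,
and `{e i}` alone identifies the weight `ρ i * P_{A i}({e i})`. On configurations whose present
hubs are `i` and `i'` the mixtures have two components, and a follower `k` with
`A i k ≠ A i' k` separates their weights; the weight of component `i` on `{e i, e i'}`, compared
with the one on `{e i}`, then identifies the odds of `A i (e i')`.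
-/

open Finset Function

section BernoulliProduct

variable {ι κ : Type*} [Fintype ι] [DecidableEq ι]

noncomputable def bernoulliProd (a : ι → ℝ) (U : Finset ι) : ℝ :=
  ∏ j, if j ∈ U then a j else 1 - a j

noncomputable def bernoulliMixture [Fintype κ] (ρ : κ → ℝ) (A : κ → ι → ℝ) (U : Finset ι) : ℝ :=
  ∑ i, ρ i * bernoulliProd (A i) U

theorem bernoulliProd_insert_mul {a : ι → ℝ} {U : Finset ι} {k : ι} (hk : k ∉ U) :
    bernoulliProd a (insert k U) * (1 - a k) = a k * bernoulliProd a U := by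
  have hrest : ∏ j ∈ {k}ᶜ, (if j ∈ insert k U then a j else 1 - a j)
      = ∏ j ∈ {k}ᶜ, (if j ∈ U then a j else 1 - a j) := by
    refine prod_congr rfl fun j hj => ?_
    rw [mem_compl, mem_singleton] at hj
    simp [hj]
  unfold bernoulliProd
  rw [Fintype.prod_eq_mul_prod_compl k, Fintype.prod_eq_mul_prod_compl k (fun j => _), hrest,
    if_pos (mem_insert_self k U), if_neg hk]
  ring

theorem bernoulliProd_eq_zero {a : ι → ℝ} {U : Finset ι} {k : ι} (hk : k ∉ U) (hak : a k = 1) :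
    bernoulliProd a U = 0 :=
  prod_eq_zero (mem_univ k) (by rw [if_neg hk, hak, sub_self])

theorem bernoulliProd_pos {a : ι → ℝ} {U : Finset ι} (hin : ∀ j ∈ U, 0 < a j)
    (hout : ∀ j ∉ U, a j < 1) : 0 < bernoulliProd a U :=
  prod_pos fun j _ => by
    split_ifs with hj
    · exact hin j hj
    · exact sub_pos.mpr (hout j hj)

theorem eq_of_mul_one_sub_eq_mul {x y a b : ℝ} (ha : x * (1 - a) = a * y)
    (hb : x * (1 - b) = b * y) (hy : y ≠ 0) : a = b := by
  have hab : (a - b) * y = 0 := by linear_combination (1 - a) * hb - (1 - b) * ha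
  exact sub_eq_zero.mp ((mul_eq_zero.mp hab).resolve_right hy)

theorem apply_eq_of_mul_bernoulliProd_eq {a b : ι → ℝ} {c c' : ℝ} {U : Finset ι} {j : ι}
    (hj : j ∉ U) (hU0 : c * bernoulliProd a U ≠ 0)
    (hU : c * bernoulliProd a U = c' * bernoulliProd b U)
    (hjU : c * bernoulliProd a (insert j U) = c' * bernoulliProd b (insert j U)) :
    a j = b j := by
  refine eq_of_mul_one_sub_eq_mul (x := c * bernoulliProd a (insert j U)) ?_ ?_ hU0
  · rw [mul_assoc, bernoulliProd_insert_mul hj]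
    ring
  · rw [hjU, hU, mul_assoc, bernoulliProd_insert_mul hj]
    ring

end BernoulliProduct

section HubModel

variable {ι κ : Type*} [Fintype ι] [DecidableEq ι] [Fintype κ]
  {e : κ → ι} {ρ ρ' : κ → ℝ} {A A' : κ → ι → ℝ}

theorem bernoulliMixture_eq_sum_of_hubs_subset (hdiag : ∀ l, A l (e l) = 1) {U : Finset ι}
    {s : Finset κ} (hU : ∀ l, e l ∈ U → l ∈ s) :
    bernoulliMixture ρ A U = ∑ l ∈ s, ρ l * bernoulliProd (A l) U := by
  refine (sum_subset (subset_univ s) fun l _ hl => ?_).symm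
  rw [bernoulliProd_eq_zero (fun h => hl (hU l h)) (hdiag l), mul_zero]

theorem hub_weight_eq (hdiag : ∀ l, A l (e l) = 1) (hdiag' : ∀ l, A' l (e l) = 1)
    (heq : ∀ U, bernoulliMixture ρ A U = bernoulliMixture ρ' A' U) {i : κ} {U : Finset ι}
    (hU : ∀ l, e l ∈ U → l = i) :
    ρ i * bernoulliProd (A i) U = ρ' i * bernoulliProd (A' i) U := by
  have hU' : ∀ l, e l ∈ U → l ∈ ({i} : Finset κ) := by simpa using hU
  simpa [bernoulliMixture_eq_sum_of_hubs_subset hdiag hU',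
    bernoulliMixture_eq_sum_of_hubs_subset hdiag' hU'] using heq U

theorem follower_entry_eq (he : Injective e) (hdiag : ∀ l, A l (e l) = 1)
    (hdiag' : ∀ l, A' l (e l) = 1) (heq : ∀ U, bernoulliMixture ρ A U = bernoulliMixture ρ' A' U)
    {i : κ} (hQ : ρ i * bernoulliProd (A i) {e i} ≠ 0) {k : ι} (hk : k ∉ Set.range e) :
    A i k = A' i k := by
  have hke : ∀ l, e l ≠ k := fun l h => hk ⟨l, h⟩
  refine apply_eq_of_mul_bernoulliProd_eq (by simpa using (hke i).symm) hQ
    (hub_weight_eq hdiag hdiag' heq (by simp [he.eq_iff])) ?_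
  exact hub_weight_eq hdiag hdiag' heq (by simp [he.eq_iff, hke])

theorem hub_entry_eq [DecidableEq κ] (he : Injective e) (hdiag : ∀ l, A l (e l) = 1)
    (hdiag' : ∀ l, A' l (e l) = 1) (heq : ∀ U, bernoulliMixture ρ A U = bernoulliMixture ρ' A' U)
    (hQ : ∀ i, ρ i * bernoulliProd (A i) {e i} ≠ 0) {i i' : κ} (hne : i ≠ i')
    (hdist : ∃ k ∉ Set.range e, A i k ≠ A i' k) :
    A i (e i') = A' i (e i') := by
  obtain ⟨k, hk, hAk⟩ := hdist
  have hke : ∀ l, e l ≠ k := fun l h => hk ⟨l, h⟩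
  set U : Finset ι := {e i', e i}
  have hkU : k ∉ U := by simp [U, (hke i).symm, (hke i').symm]
  have hpair : ∀ V : Finset ι, (∀ l, e l ∈ V → l ∈ ({i, i'} : Finset κ)) →
      ρ i * bernoulliProd (A i) V + ρ i' * bernoulliProd (A i') V
        = ρ' i * bernoulliProd (A' i) V + ρ' i' * bernoulliProd (A' i') V := by
    intro V hV
    have hmix := heq V
    rwa [bernoulliMixture_eq_sum_of_hubs_subset hdiag hV,
      bernoulliMixture_eq_sum_of_hubs_subset hdiag' hV, sum_pair hne, sum_pair hne] at hmix
  have e0 := hpair U (by simp [U, he.eq_iff, or_comm])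
  have e1 := hpair (insert k U) (by simp [U, he.eq_iff, hke, or_comm])
  have r := bernoulliProd_insert_mul (a := A i) hkU
  have r' := bernoulliProd_insert_mul (a := A i') hkU
  have s := bernoulliProd_insert_mul (a := A' i) hkU
  have s' := bernoulliProd_insert_mul (a := A' i') hkU
  rw [← follower_entry_eq he hdiag hdiag' heq (hQ i) hk] at s
  rw [← follower_entry_eq he hdiag hdiag' heq (hQ i') hk] at s'
  -- On `U` and on `insert k U` the two components are weighted by the odds `1` and
  -- `A i k / (1 - A i k)`, `A i' k / (1 - A i' k)` respectively, and these differ.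
  have hw : ρ i * bernoulliProd (A i) U = ρ' i * bernoulliProd (A' i) U := by
    have hd : (ρ i * bernoulliProd (A i) U - ρ' i * bernoulliProd (A' i) U) * (A i k - A i' k)
        = 0 := by
      linear_combination (1 - A i k) * (1 - A i' k) * e1 - (1 - A i' k) * ρ i * r
        - (1 - A i k) * ρ i' * r' + (1 - A i' k) * ρ' i * s + (1 - A i k) * ρ' i' * s'
        - (1 - A i k) * A i' k * e0
    exact sub_eq_zero.mp ((mul_eq_zero.mp hd).resolve_right (sub_ne_zero.mpr hAk))
  exact apply_eq_of_mul_bernoulliProd_eq (by simpa [he.eq_iff] using hne.symm) (hQ i)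
    (hub_weight_eq hdiag hdiag' heq (by simp [he.eq_iff])) hw

theorem bernoulliMixture_hub_identifiable [DecidableEq κ] (he : Injective e) (hρ : ∀ i, 0 < ρ i)
    (hdiag : ∀ l, A l (e l) = 1) (hdiag' : ∀ l, A' l (e l) = 1)
    (hoff : ∀ i j, j ≠ e i → A i j < 1)
    (hdist : ∀ i i', i ≠ i' → ∃ k ∉ Set.range e, A i k ≠ A i' k)
    (heq : ∀ U, bernoulliMixture ρ A U = bernoulliMixture ρ' A' U) :
    ρ = ρ' ∧ A = A' := by
  have hsingle : ∀ i, 0 < bernoulliProd (A i) {e i} := fun i =>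
    bernoulliProd_pos (by simp [hdiag]) fun j hj => hoff i j (by simpa using hj)
  have hQ : ∀ i, ρ i * bernoulliProd (A i) {e i} ≠ 0 := fun i => (mul_pos (hρ i) (hsingle i)).ne'
  have hA : A = A' := by
    funext i j
    by_cases hj : j ∈ Set.range e
    · obtain ⟨i', rfl⟩ := hj
      rcases eq_or_ne i i' with rfl | hne
      · rw [hdiag, hdiag']
      · exact hub_entry_eq he hdiag hdiag' heq hQ hne (hdist i i' hne)
    · exact follower_entry_eq he hdiag hdiag' heq (hQ i) hj
  refine ⟨funext fun i => ?_, hA⟩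
  have hρi := hub_weight_eq hdiag hdiag' heq (i := i) (U := {e i}) (by simp [he.eq_iff])
  rw [← hA] at hρi
  exact mul_right_cancel₀ (hsingle i).ne' hρi

end HubModel

theorem stmt_9_general (n_L n : ℕ) (h : n_L < n)
    (ρ ρ' : Fin n_L → ℝ) (A A' : Fin n_L → Fin n → ℝ)
    (hρpos : ∀ i, 0 < ρ i ∧ ρ i < 1)
    (hdiag : ∀ i : Fin n_L, A i (Fin.castLE h.le i) = 1)
    (hdiag' : ∀ i : Fin n_L, A' i (Fin.castLE h.le i) = 1)
    (hoff : ∀ (i : Fin n_L) (j : Fin n), (j : ℕ) ≠ (i : ℕ) →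
      0 ≤ A i j ∧ A i j < 1)
    (hdist : ∀ i i' : Fin n_L, i ≠ i' →
      ∃ k : Fin n, n_L ≤ (k : ℕ) ∧ A i k ≠ A i' k)
    (heq : ∀ g : Fin n → Bool,
      (∑ i, ρ i * ∏ j, (if g j then A i j else 1 - A i j)) =
      (∑ i, ρ' i * ∏ j, (if g j then A' i j else 1 - A' i j))) :
    ρ = ρ' ∧ A = A' := by
  refine bernoulliMixture_hub_identifiable (Fin.castLE_injective h.le) (fun i => (hρpos i).1)
    hdiag hdiag' (fun i j hj => (hoff i j fun hji => hj (Fin.ext hji)).2) ?_ fun U => ?_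
  · intro i i' hne
    obtain ⟨k, hk, hAk⟩ := hdist i i' hne
    refine ⟨k, ?_, hAk⟩
    rintro ⟨l, rfl⟩
    rw [Fin.val_castLE] at hk
    exact hk.not_gt l.isLt
  · simpa [bernoulliMixture, bernoulliProd] using heq fun j => decide (j ∈ U)

/-- Identifiability of the asymmetric hub model (Theorem 1): under the conditions
that diagonal entries equal 1, off-diagonal entries lie in `[0,1)`, and any two
hub rows differ on some follower column, two parameterizations inducing the same
distribution on `{0,1}ⁿ` must coincide. -/
theorem stmt_9 (n_L n : ℕ) (h : n_L < n)
    (ρ ρ' : Fin n_L → ℝ) (A A' : Fin n_L → Fin n → ℝ)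
    (hρpos : ∀ i, 0 < ρ i ∧ ρ i < 1) (hρ'pos : ∀ i, 0 < ρ' i ∧ ρ' i < 1)
    (hρsum : ∑ i, ρ i = 1) (hρ'sum : ∑ i, ρ' i = 1)
    (hdiag : ∀ i : Fin n_L, A i (Fin.castLE h.le i) = 1)
    (hdiag' : ∀ i : Fin n_L, A' i (Fin.castLE h.le i) = 1)
    (hoff : ∀ (i : Fin n_L) (j : Fin n), (j : ℕ) ≠ (i : ℕ) →
      0 ≤ A i j ∧ A i j < 1)
    (hoff' : ∀ (i : Fin n_L) (j : Fin n), (j : ℕ) ≠ (i : ℕ) →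
      0 ≤ A' i j ∧ A' i j < 1)
    (hdist : ∀ i i' : Fin n_L, i ≠ i' →
      ∃ k : Fin n, n_L ≤ (k : ℕ) ∧ A i k ≠ A i' k)
    (heq : ∀ g : Fin n → Bool,
      (∑ i, ρ i * ∏ j, (if g j then A i j else 1 - A i j)) =
      (∑ i, ρ' i * ∏ j, (if g j then A' i j else 1 - A' i j))) :
    ρ = ρ' ∧ A = A' :=
  stmt_9_general n_L n h ρ ρ' A A' hρpos hdiag hdiag' hoff hdist heq
end
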